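/- Let A be an admissible twig and A* its adjoint (the unique admissible twig with e(A*) = 1 − e(ᵗA)). Then the intersection matrix of the concatenated chain [A, 1, A*] (diagonal entries the negatives of the entries of A, then −1, then the negatives of the entries of A*, with off-diagonal entries 1 between consecutive positions) has determinant 0. -/

import Mathlib

/-- The tridiagonal matrix associated to a twig `[m₁,…,m_r]`: diagonal entries `mᵢ`,
sub- and super-diagonal entries `-1`. -/
def tridiagMatrix (L : List ℤ) : Matrix (Fin L.length) (Fin L.length) ℤ :=
  Matrix.of fun i j =>
    if i = j then L.get i
    else if (i : ℕ) + 1 = (j : ℕ) ∨ (j : ℕ) + 1 = (i : ℕ) then -1 else 0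

/-- The determinant `d(A)` of a twig; `d(∅) = 1` by the empty determinant convention. -/
def twigDet (L : List ℤ) : ℤ := (tridiagMatrix L).det

/-- The inductance `e(A) = d(Ā)/d(A)`. -/
def inductance (L : List ℤ) : ℚ := (twigDet L.tail : ℚ) / (twigDet L : ℚ)

/-- A twig is admissible if all entries are at least 2. -/
def Admissible (L : List ℤ) : Prop := ∀ m ∈ L, (2 : ℤ) ≤ m

/-- The intersection matrix of a weight sequence `[n₁,…,n_s]`: diagonal entries `-nᵢ`,
sub- and super-diagonal entries `1`. -/
def interMatrix (L : List ℤ) : Matrix (Fin L.length) (Fin L.length) ℤ :=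
  Matrix.of fun i j =>
    if i = j then -(L.get i)
    else if (i : ℕ) + 1 = (j : ℕ) ∨ (j : ℕ) + 1 = (i : ℕ) then 1 else 0

def triT (d : ℕ → ℤ) (n : ℕ) : Matrix (Fin n) (Fin n) ℤ :=
  Matrix.of fun i j =>
    if i = j then d i
    else if (i : ℕ) + 1 = (j : ℕ) ∨ (j : ℕ) + 1 = (i : ℕ) then -1 else 0

lemma triT_congr {d e : ℕ → ℤ} {n : ℕ} (h : ∀ k < n, d k = e k) : triT d n = triT e n := by
  ext i j
  simp only [triT, Matrix.of_apply]
  split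
  · exact h i i.isLt
  · rfl

lemma triT_det_zero (d : ℕ → ℤ) : (triT d 0).det = 1 := Matrix.det_fin_zero

lemma triT_det_one (d : ℕ → ℤ) : (triT d 1).det = d 0 := by
  rw [Matrix.det_fin_one]; rfl

lemma triT_det_rec (d : ℕ → ℤ) (n : ℕ) :
    (triT d (n + 2)).det =
      d 0 * (triT (fun k => d (k + 1)) (n + 1)).det - (triT (fun k => d (k + 2)) n).det := by
  rw [Matrix.det_succ_row_zero, Fin.sum_univ_succ, Fin.sum_univ_succ]
  have hz : ∀ j : Fin n, triT d (n + 2) 0 j.succ.succ = 0 := by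
    intro j
    simp only [triT, Matrix.of_apply, Fin.ext_iff, Fin.val_succ, Fin.val_zero]
    split_ifs with h1 h2 <;> simp_all <;> omega
  simp only [hz]
  simp only [mul_zero, zero_mul, mul_comm, Finset.sum_const_zero, add_zero]
  have h0 : triT d (n + 2) 0 0 = d 0 := rfl
  have h1 : triT d (n + 2) 0 (Fin.succ 0) = -1 := rfl
  rw [h0, h1]
  -- submatrix at column 0 is triT (shift by 1)
  have hsub0 : (triT d (n + 2)).submatrix Fin.succ (Fin.succAbove 0) =
      triT (fun k => d (k + 1)) (n + 1) := by
    ext i j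
    simp only [Matrix.submatrix_apply, triT, Matrix.of_apply, Fin.succAbove_zero,
      Fin.ext_iff, Fin.val_succ]
    by_cases h : (i : ℕ) = (j : ℕ)
    · rw [if_pos (by omega), if_pos h]
    · rw [if_neg (by omega), if_neg h]
      by_cases h2 : (i : ℕ) + 1 = (j : ℕ) ∨ (j : ℕ) + 1 = (i : ℕ)
      · rw [if_pos (by omega), if_pos h2]
      · rw [if_neg (by omega), if_neg h2]
  -- column-1 minor: expand along first column
  have hN : ((triT d (n + 2)).submatrix Fin.succ ((Fin.succ (0 : Fin (n+1))).succAbove)).det =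
      -(triT (fun k => d (k + 2)) n).det := by
    rw [Matrix.det_succ_column_zero, Fin.sum_univ_succ]
    have hz2 : ∀ i : Fin n,
        (triT d (n + 2)).submatrix Fin.succ ((Fin.succ (0 : Fin (n+1))).succAbove) i.succ 0 = 0 := by
      intro i
      simp only [Matrix.submatrix_apply, triT, Matrix.of_apply, Fin.ext_iff, Fin.val_succ]
      have : (((Fin.succ (0 : Fin (n+1))).succAbove (0 : Fin (n+1))) : ℕ) = 0 := rfl
      rw [this, if_neg (by omega), if_neg (by omega)]
    simp only [hz2]
    simp only [zero_mul, mul_zero, Finset.sum_const_zero, add_zero]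
    have hv : (triT d (n + 2)).submatrix Fin.succ ((Fin.succ (0 : Fin (n+1))).succAbove) 0 0 = -1 := rfl
    rw [hv]
    have hsub2 : ((triT d (n + 2)).submatrix Fin.succ ((Fin.succ (0 : Fin (n+1))).succAbove)).submatrix
        (Fin.succAbove 0) Fin.succ = triT (fun k => d (k + 2)) n := by
      ext i j
      simp only [Matrix.submatrix_apply, Fin.succAbove_zero, triT, Matrix.of_apply,
        Fin.ext_iff, Fin.val_succ]
      have hcol : (((Fin.succ (0 : Fin (n+1))).succAbove (j.succ : Fin (n+1))) : ℕ) = (j : ℕ) + 2 := by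
        simp [Fin.succAbove, Fin.lt_def]
      rw [hcol]
      by_cases h : (i : ℕ) = (j : ℕ)
      · rw [if_pos (by omega), if_pos h]
      · rw [if_neg (by omega), if_neg h]
        by_cases h2 : (i : ℕ) + 1 = (j : ℕ) ∨ (j : ℕ) + 1 = (i : ℕ)
        · rw [if_pos (by omega), if_pos h2]
        · rw [if_neg (by omega), if_neg h2]
    rw [hsub2]
    simp [Fin.val_succ]
  rw [hsub0, hN]
  simp [Fin.val_succ]
  ring

lemma tridiag_eq_triT (L : List ℤ) :
    tridiagMatrix L = triT (fun k => L.getD k 0) L.length := by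
  ext i j
  simp only [tridiagMatrix, triT, Matrix.of_apply]
  congr 1
  rw [List.get_eq_getElem, List.getD_eq_getElem L 0 i.isLt]

lemma twigDet_eq_triT (L : List ℤ) : twigDet L = (triT (fun k => L.getD k 0) L.length).det := by
  rw [twigDet, tridiag_eq_triT]

lemma twigDet_nil : twigDet ([] : List ℤ) = 1 := Matrix.det_fin_zero

lemma twigDet_singleton (a : ℤ) : twigDet [a] = a := by
  rw [twigDet_eq_triT]
  exact triT_det_one _

lemma twigDet_cons (a : ℤ) (L : List ℤ) (hL : L ≠ []) :
    twigDet (a :: L) = a * twigDet L - twigDet L.tail := by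
  obtain ⟨b, M, rfl⟩ : ∃ b M, L = b :: M := by
    cases L with
    | nil => exact absurd rfl hL
    | cons b M => exact ⟨b, M, rfl⟩
  rw [twigDet_eq_triT (a :: b :: M)]
  show (triT _ (M.length + 2)).det = _
  rw [triT_det_rec]
  simp only [List.tail_cons]
  rw [twigDet_eq_triT (b :: M), twigDet_eq_triT M]
  rfl

lemma twigDet_append (B : List ℤ) (hB : B ≠ []) :
    ∀ A : List ℤ, A ≠ [] →
      twigDet (A ++ B) = twigDet A * twigDet B - twigDet A.dropLast * twigDet B.tail := by
  have key : ∀ n (A : List ℤ), A.length ≤ n → A ≠ [] →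
      twigDet (A ++ B) = twigDet A * twigDet B - twigDet A.dropLast * twigDet B.tail := by
    intro n
    induction n with
    | zero =>
      intro A hlen hne
      cases A with
      | nil => exact absurd rfl hne
      | cons a A => simp at hlen
    | succ n ih =>
      intro A hlen hne
      match A with
      | [a] =>
        show twigDet (a :: B) = _
        rw [twigDet_cons a B hB, twigDet_singleton]
        simp [twigDet_nil]
      | [a, x] =>
        show twigDet (a :: x :: B) = _
        rw [twigDet_cons a (x :: B) (by simp), twigDet_cons x B hB, List.tail_cons,
          twigDet_cons a [x] (by simp), twigDet_singleton, List.tail_cons]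
        simp only [List.dropLast_cons₂, List.dropLast_singleton, twigDet_singleton, twigDet_nil]
        ring
      | a :: x :: y :: A3 =>
        have i1 := ih (x :: y :: A3) (by simp at hlen ⊢; omega) (by simp)
        have i2 := ih (y :: A3) (by simp at hlen ⊢; omega) (by simp)
        show twigDet (a :: ((x :: y :: A3) ++ B)) = _
        rw [twigDet_cons a _ (by simp)]
        have ht : ((x :: y :: A3) ++ B).tail = (y :: A3) ++ B := rfl
        rw [ht, i1, i2]
        rw [twigDet_cons a (x :: y :: A3) (by simp), List.tail_cons]
        simp only [List.dropLast_cons₂]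
        rw [twigDet_cons a (x :: (y :: A3).dropLast) (by simp), List.tail_cons]
        ring
  exact fun A => key A.length A le_rfl

lemma twigDet_reverse (L : List ℤ) : twigDet L.reverse = twigDet L := by
  have hlen : L.reverse.length = L.length := List.length_reverse
  let e : Fin L.length ≃ Fin L.reverse.length := Fin.revPerm.trans (finCongr hlen.symm)
  have hM : tridiagMatrix L = (tridiagMatrix L.reverse).submatrix e e := by
    ext i j
    have hi := i.isLt
    have hj := j.isLt
    have hei : ((e i : Fin L.reverse.length) : ℕ) = L.length - ((i : ℕ) + 1) := rfl
    have hej : ((e j : Fin L.reverse.length) : ℕ) = L.length - ((j : ℕ) + 1) := rfl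
    have c1 : (e i = e j) ↔ (i = j) := by
      rw [Fin.ext_iff, Fin.ext_iff, hei, hej]
      constructor <;> intro h <;> omega
    have c2 : (((e i : Fin L.reverse.length) : ℕ) + 1 = ((e j : Fin L.reverse.length) : ℕ) ∨
        ((e j : Fin L.reverse.length) : ℕ) + 1 = ((e i : Fin L.reverse.length) : ℕ)) ↔
        ((i : ℕ) + 1 = (j : ℕ) ∨ (j : ℕ) + 1 = (i : ℕ)) := by
      rw [hei, hej]
      constructor <;> intro h <;> omega
    have hval : L.reverse.get (e i) = L.get i := by
      have h2 : e i = ⟨L.length - 1 - (i : ℕ), by omega⟩ :=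
        Fin.ext (show L.length - ((i : ℕ) + 1) = L.length - 1 - (i : ℕ) by omega)
      rw [h2]
      rw [List.get_eq_getElem, List.get_eq_getElem, List.getElem_reverse]
      congr 1
      show L.length - 1 - (L.length - 1 - (i : ℕ)) = i
      omega
    simp only [Matrix.submatrix_apply, tridiagMatrix, Matrix.of_apply, c1, c2, hval]
  rw [twigDet, twigDet, hM, Matrix.det_submatrix_equiv_self]

lemma twigDet_pos_aux : ∀ L : List ℤ, Admissible L →
    0 < twigDet L ∧ twigDet L.tail ≤ twigDet L := by
  intro L
  induction L with
  | nil => intro _; simp [twigDet_nil]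
  | cons a L ih =>
    intro hadm
    have ha : (2 : ℤ) ≤ a := hadm a (by simp)
    have hL : Admissible L := fun m hm => hadm m (by simp [hm])
    obtain ⟨h1, h2⟩ := ih hL
    cases L with
    | nil =>
      constructor
      · rw [twigDet_singleton]; omega
      · simp [twigDet_singleton, twigDet_nil]; omega
    | cons b M =>
      rw [twigDet_cons a (b :: M) (by simp), List.tail_cons]
      simp only [List.tail_cons] at h2 ⊢
      have hmul : 2 * twigDet (b :: M) ≤ a * twigDet (b :: M) :=
        mul_le_mul_of_nonneg_right ha h1.le
      constructor <;> linarith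

lemma twigDet_pos {L : List ℤ} (h : Admissible L) : 0 < twigDet L :=
  (twigDet_pos_aux L h).1

theorem main_det (A B : List ℤ)
    (hA : Admissible A) (hAne : A ≠ []) (hB : Admissible B) (hBne : B ≠ [])
    (hadj : inductance B = 1 - inductance A.reverse) :
    twigDet (A ++ 1 :: B) = 0 := by
  have hdA : (0 : ℤ) < twigDet A := twigDet_pos hA
  have hdB : (0 : ℤ) < twigDet B := twigDet_pos hB
  have hrev : twigDet A.reverse = twigDet A := twigDet_reverse A
  have hrevtail : twigDet A.reverse.tail = twigDet A.dropLast := by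
    rw [List.tail_reverse, twigDet_reverse]
  -- turn the rational hypothesis into an integer identity
  have key : twigDet A * twigDet B.tail + twigDet A.dropLast * twigDet B =
      twigDet A * twigDet B := by
    have hA0 : ((twigDet A : ℚ)) ≠ 0 := by exact_mod_cast hdA.ne'
    have hB0 : ((twigDet B : ℚ)) ≠ 0 := by exact_mod_cast hdB.ne'
    rw [inductance, inductance, hrev, hrevtail] at hadj
    have := hadj
    field_simp at this
    have hq : (twigDet A : ℚ) * twigDet B.tail + twigDet A.dropLast * twigDet B =
        twigDet A * twigDet B := by
      field_simp at hadj
      linarith [hadj]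
    exact_mod_cast hq
  rw [twigDet_append (1 :: B) (by simp) A hAne, List.tail_cons,
    twigDet_cons 1 B hBne]
  linarith [key]

/-- If `A` is an admissible twig and `B` is its adjoint `A*` (the unique admissible
twig with `e(B) = 1 − e(ᵗA)`), then the intersection matrix of the chain
`[A, 1, A*]` has determinant `0`. -/
theorem det_interMatrix_adjoint_chain (A B : List ℤ)
    (hA : Admissible A) (hAne : A ≠ []) (hB : Admissible B) (hBne : B ≠ [])
    (hadj : inductance B = 1 - inductance A.reverse) :
    (interMatrix (A ++ 1 :: B)).det = 0 := by
  have h0 : twigDet (A ++ 1 :: B) = 0 := main_det A B hA hAne hB hBne hadj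
  have hneg : interMatrix (A ++ 1 :: B) = -(tridiagMatrix (A ++ 1 :: B)) := by
    ext i j
    simp only [interMatrix, tridiagMatrix, Matrix.neg_apply, Matrix.of_apply]
    split_ifs <;> ring
  rw [hneg, Matrix.det_neg]
  rw [show (tridiagMatrix (A ++ 1 :: B)).det = twigDet (A ++ 1 :: B) from rfl, h0, mul_zero]
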